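/- Let Π be a natural deduction derivation in the minimal implicational logic M⊃ of a formula α from a finite set Δ = {δ1,…,δn} of open assumptions. Then there exists a normal natural deduction derivation Π′ of α from some subset Δ′ ⊆ Δ. -/

import Mathlib

/-- Formulas of minimal implicational logic M⊃. -/
inductive MFormula : Type
  | var : ℕ → MFormula
  | imp : MFormula → MFormula → MFormula
deriving DecidableEq

namespace MFormula

/-- Size of a formula: number of vertices of its syntax tree. -/
def size : MFormula → ℕ
  | .var _ => 1
  | .imp a b => a.size + b.size + 1

/-- Subformula relation. -/
inductive Subf : MFormula → MFormula → Prop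
  | refl (t : MFormula) : Subf t t
  | impL {s a b : MFormula} : Subf s a → Subf s (imp a b)
  | impR {s a b : MFormula} : Subf s b → Subf s (imp a b)

/-- The finite set of subformulas of a formula. -/
def subformulas : MFormula → Finset MFormula
  | .var n => {.var n}
  | .imp a b => insert (imp a b) (a.subformulas ∪ b.subformulas)

end MFormula

/-- Natural deduction derivation trees for M⊃.  A leaf is an assumption
occurrence, carrying its formula and `none` if it stays open, or `some n`
if it is discharged by the `n`-th ⊃-Intro application below it (de Bruijn
style, counting enclosing ⊃-Intro applications from the leaf downwards).
`elim a b` applies ⊃-Elim with minor premise `a` and major premise `b`;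
`intro A t` applies ⊃-Intro discharging (the marked occurrences of) `A`. -/
inductive NDTree : Type
  | leaf : MFormula → Option ℕ → NDTree
  | elim : NDTree → NDTree → NDTree
  | intro : MFormula → NDTree → NDTree
deriving DecidableEq

namespace NDTree

/-- Conclusion of a derivation tree relative to the list of formulas
introduced by enclosing ⊃-Intro applications (innermost first);
`none` if the tree is not a well-formed derivation. -/
def concl : NDTree → List MFormula → Option MFormula
  | .leaf A none, _ => some A
  | .leaf A (some n), ctx => if ctx[n]? = some A then some A else none
  | .elim a b, ctx =>
      match concl a ctx, concl b ctx with
      | some x, some (.imp p q) => if p = x then some q else none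
      | _, _ => none
  | .intro A t, ctx => (concl t (A :: ctx)).map (fun B => MFormula.imp A B)

/-- Size of a derivation: its number of nodes. -/
def size : NDTree → ℕ
  | .leaf _ _ => 1
  | .elim a b => a.size + b.size + 1
  | .intro _ t => t.size + 1

/-- Height of a derivation: maximal number of edges on a root-to-leaf path. -/
def height : NDTree → ℕ
  | .leaf _ _ => 0
  | .elim a b => max a.height b.height + 1
  | .intro _ t => t.height + 1

/-- Open assumptions of a subtree sitting below `d` of its own
⊃-Intro applications (at top level `d = 0`): leaves discharged by no
⊃-Intro of the subtree itself. -/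
def openAssumAux : NDTree → ℕ → Finset MFormula
  | .leaf A none, _ => {A}
  | .leaf A (some n), d => if d ≤ n then {A} else ∅
  | .elim a b, d => openAssumAux a d ∪ openAssumAux b d
  | .intro _ t, d => openAssumAux t (d + 1)

/-- The set of open (undischarged) assumptions of a derivation. -/
def openAssum (t : NDTree) : Finset MFormula := openAssumAux t 0

/-- A derivation is normal if no formula occurrence is simultaneously the
conclusion of a ⊃-Intro and the major premise of a ⊃-Elim. -/
def Normal : NDTree → Prop
  | .leaf _ _ => True
  | .elim a b => Normal a ∧ Normal b ∧ ∀ A u, b ≠ .intro A u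
  | .intro _ t => Normal t

/-- `T` is a proof of `α`: a derivation with conclusion `α` and
no open assumptions. -/
def IsProofOf (t : NDTree) (α : MFormula) : Prop :=
  concl t [] = some α ∧ openAssum t = ∅

/-- A normal derivation (in context `ctx`) is expanded if every minimal
formula, i.e. every formula occurrence that is both the conclusion of a
⊃-Elim and the premise of a ⊃-Intro, is a propositional variable. -/
def Expanded : NDTree → List MFormula → Prop
  | .leaf _ _, _ => True
  | .elim a b, ctx => Expanded a ctx ∧ Expanded b ctx
  | .intro A t, ctx => Expanded t (A :: ctx) ∧
      (∀ u v, t = .elim u v → ∃ i, concl t (A :: ctx) = some (.var i))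

/-- `Subtree s t`: `s` is a sub-derivation (a node of `t` together with
everything above it) of `t`. -/
inductive Subtree : NDTree → NDTree → Prop
  | refl (t : NDTree) : Subtree t t
  | elimL {s a b : NDTree} : Subtree s a → Subtree s (.elim a b)
  | elimR {s a b : NDTree} : Subtree s b → Subtree s (.elim a b)
  | intro {s : NDTree} {A : MFormula} {t : NDTree} : Subtree s t → Subtree s (.intro A t)

/-- Number of instances (sub-derivation occurrences identical to `s`
as labeled trees) of `s` in a derivation. -/
def countInst (s : NDTree) : NDTree → ℕ
  | .leaf A o => if NDTree.leaf A o = s then 1 else 0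
  | .elim a b => (if NDTree.elim a b = s then 1 else 0) + countInst s a + countInst s b
  | .intro A t => (if NDTree.intro A t = s then 1 else 0) + countInst s t

/-- Number of instances of `s` occurring at level (distance from the root) `μ`. -/
def countInstAt (s : NDTree) : NDTree → ℕ → ℕ
  | t, 0 => if t = s then 1 else 0
  | .leaf _ _, _ + 1 => 0
  | .elim a b, n + 1 => countInstAt s a n + countInstAt s b n
  | .intro _ t, n + 1 => countInstAt s t n

/-- `OccAt T ctx s ctx'` : `s` occurs in `T` (whose own context is `ctx`)
as a node-with-everything-above-it, with enclosing-intro context `ctx'`. -/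
inductive OccAt : NDTree → List MFormula → NDTree → List MFormula → Prop
  | refl (t : NDTree) (ctx : List MFormula) : OccAt t ctx t ctx
  | elimL {T : NDTree} {ctx : List MFormula} {a b : NDTree} {ctx' : List MFormula} :
      OccAt T ctx (.elim a b) ctx' → OccAt T ctx a ctx'
  | elimR {T : NDTree} {ctx : List MFormula} {a b : NDTree} {ctx' : List MFormula} :
      OccAt T ctx (.elim a b) ctx' → OccAt T ctx b ctx'
  | intro {T : NDTree} {ctx : List MFormula} {A : MFormula} {t : NDTree} {ctx' : List MFormula} :
      OccAt T ctx (.intro A t) ctx' → OccAt T ctx t (A :: ctx')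

/-- Each node of a derivation lies on a unique branch; branches are in
bijection with their endpoints: the root of the derivation and the minor
premises of ⊃-Elim applications. -/
def IsBranchEndpoint (T s : NDTree) (ctx : List MFormula) : Prop :=
  (s = T ∧ ctx = []) ∨ ∃ u, OccAt T [] (NDTree.elim s u) ctx

/-- The (top-down) sequence of formulas of the branch ending at the root of
the given subtree: trace upwards through premises of ⊃-Intro and major
premises of ⊃-Elim up to a top-formula. -/
def branchSeq : NDTree → List MFormula → Option (List MFormula)
  | .leaf A o, ctx => (concl (.leaf A o) ctx).map (fun c => [c])
  | .elim a b, ctx =>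
      match branchSeq b ctx, concl (.elim a b) ctx with
      | some l, some c => some (l ++ [c])
      | _, _ => none
  | .intro A t, ctx =>
      match branchSeq t (A :: ctx), concl (.intro A t) ctx with
      | some l, some c => some (l ++ [c])
      | _, _ => none

/-- The (top-down) E-part of the branch ending at the root of the given
subtree: the top-formula and the successive conclusions of major-premise
⊃-Elim steps, ending at the minimal formula of the branch. -/
def epart : NDTree → List MFormula → Option (List MFormula)
  | .leaf A o, ctx => (concl (.leaf A o) ctx).map (fun c => [c])
  | .elim a b, ctx =>
      match epart b ctx, concl (.elim a b) ctx with
      | some l, some c => some (l ++ [c])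
      | _, _ => none
  | .intro A t, ctx => epart t (A :: ctx)

/-- Number of ⊃-Intro applications forming the I-part at the bottom of a
branch endpoint subtree. -/
def introCount : NDTree → ℕ
  | .intro _ t => introCount t + 1
  | _ => 0

/-- Count of branch endpoints strictly inside the given subtree (i.e. minor
premises of ⊃-Elim) whose branch has formula sequence `b`. -/
def brCount (b : List MFormula) : NDTree → List MFormula → ℕ
  | .leaf _ _, _ => 0
  | .elim a c, ctx =>
      (if branchSeq a ctx = some b then 1 else 0) + brCount b a ctx + brCount b c ctx
  | .intro A t, ctx => brCount b t (A :: ctx)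

/-- Total number of branches of `T` whose formula sequence is `b`. -/
def brTotal (b : List MFormula) (T : NDTree) : ℕ :=
  (if branchSeq T [] = some b then 1 else 0) + brCount b T []

/-- Count of branch endpoints strictly inside the given subtree (whose root
is at level `d` of the ambient derivation) whose branch has formula
sequence `b` and whose minimal formula occurs at level `μ`. -/
def brMinCount (b : List MFormula) (μ : ℕ) : NDTree → List MFormula → ℕ → ℕ
  | .leaf _ _, _, _ => 0
  | .elim a c, ctx, d =>
      (if branchSeq a ctx = some b ∧ d + 1 + introCount a = μ then 1 else 0)
      + brMinCount b μ a ctx (d + 1) + brMinCount b μ c ctx (d + 1)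
  | .intro A t, ctx, d => brMinCount b μ t (A :: ctx) (d + 1)

/-- Total number of branches of `T` with formula sequence `b` whose minimal
formula occurs at level `μ` of `T`. -/
def brMinTotal (b : List MFormula) (μ : ℕ) (T : NDTree) : ℕ :=
  (if branchSeq T [] = some b ∧ introCount T = μ then 1 else 0) + brMinCount b μ T [] 0

/-- No occurrence of `A` in the given subtree (sitting at intro-depth `d`
below a fixed ⊃-Intro application) is an open assumption of the subtree
escaping that ⊃-Intro: every leaf labeled `A` is discharged by an
⊃-Intro at distance at most `d`. -/
def NoOpenBeyond (A : MFormula) : NDTree → ℕ → Prop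
  | .leaf B o, d => B = A → ∃ n, o = some n ∧ n ≤ d
  | .elim a b, d => NoOpenBeyond A a d ∧ NoOpenBeyond A b d
  | .intro _ t, d => NoOpenBeyond A t (d + 1)

/-- Every ⊃-Intro application of the derivation is greedy: it discharges
all occurrences of its assumption that are open in the sub-derivation of
its premise. -/
def Greedy : NDTree → Prop
  | .leaf _ _ => True
  | .elim a b => Greedy a ∧ Greedy b
  | .intro A t => NoOpenBeyond A t 0 ∧ Greedy t

/-- A matrix of `T`: a sub-derivation all of whose instances in `T` occur
at a single level. -/
def IsMatrix (s T : NDTree) : Prop :=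
  Subtree s T ∧ ∃ μ, ∀ ν, 0 < countInstAt s T ν → ν = μ

end NDTree

/-- A Kripke model for M⊃: a preordered set of worlds with a monotone
valuation on propositional variables. -/
structure KModel where
  World : Type
  le : World → World → Prop
  le_refl : ∀ w, le w w
  le_trans : ∀ {a b c}, le a b → le b c → le a c
  val : World → ℕ → Prop
  mono : ∀ {w w'}, le w w' → ∀ p, val w p → val w' p

/-- Kripke satisfaction for M⊃. -/
def KSat (M : KModel) : MFormula → M.World → Prop
  | .var p, w => M.val w p
  | .imp a b, w => ∀ w', M.le w w' → KSat M a w' → KSat M b w'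

/-- Semantic entailment: every world of every Kripke model satisfying all
of `Δ` satisfies `β`. -/
def KEntails (Δ : Set MFormula) (β : MFormula) : Prop :=
  ∀ (M : KModel) (w : M.World), (∀ δ ∈ Δ, KSat M δ w) → KSat M β w

/-
Normalization by evaluation. Contexts Γ, ordered by inclusion, form a Kripke model in which a
variable holds at Γ iff it has a normal derivation from Γ. By induction on formulas, every formula
forced at Γ has a normal derivation from Γ ("reify"), and every neutral normal derivation (one not
ending in ⊃-Intro) from Γ yields forcing at Γ ("reflect"); the two directions must be proved
together because of the contravariance of ⊃. Soundness of derivations in this model then turns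
any derivation into a forcing witness, which reify converts into a normal derivation from the
same assumptions.
-/

namespace NDTree

theorem concl_leaf_some_eq_some {A c : MFormula} {n : ℕ} {ctx : List MFormula} :
    concl (.leaf A (some n)) ctx = some c ↔ ctx[n]? = some A ∧ A = c := by
  simp only [concl]
  split_ifs <;> simp_all

theorem concl_elim_eq_some {a b : NDTree} {ctx : List MFormula} {c : MFormula} :
    concl (.elim a b) ctx = some c ↔
      ∃ x, concl a ctx = some x ∧ concl b ctx = some (.imp x c) := by
  simp only [concl]
  split <;> grind

theorem concl_append {t : NDTree} {ctx : List MFormula} {c : MFormula} (ext : List MFormula)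
    (h : concl t ctx = some c) : concl t (ctx ++ ext) = some c := by
  induction t generalizing ctx c with
  | leaf B o =>
    rcases o with _ | n
    · simpa [concl] using h
    · obtain ⟨hn, rfl⟩ := concl_leaf_some_eq_some.mp h
      exact concl_leaf_some_eq_some.mpr ⟨List.getElem?_append_left
        (List.getElem?_eq_some_iff.mp hn).1 ▸ hn, rfl⟩
  | elim a b iha ihb =>
    obtain ⟨x, ha, hb⟩ := concl_elim_eq_some.mp h
    exact concl_elim_eq_some.mpr ⟨x, iha ha, ihb hb⟩
  | intro A t ih =>
    simp only [concl, Option.map_eq_some_iff] at h ⊢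
    obtain ⟨B, hB, rfl⟩ := h
    exact ⟨B, ih hB, rfl⟩

def discharge (A : MFormula) : NDTree → ℕ → NDTree
  | .leaf B none, d => if B = A then .leaf B (some d) else .leaf B none
  | .leaf B (some n), _ => .leaf B (some n)
  | .elim a b, d => .elim (discharge A a d) (discharge A b d)
  | .intro C t, d => .intro C (discharge A t (d + 1))

theorem concl_discharge {A : MFormula} {t : NDTree} {ctx : List MFormula} {d : ℕ}
    (hd : ctx[d]? = some A) : concl (discharge A t d) ctx = concl t ctx := by
  induction t generalizing ctx d with
  | leaf B o =>
    rcases o with _ | n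
    · by_cases hBA : B = A
      · subst hBA
        simp [discharge, concl, hd]
      · simp [discharge, hBA]
    · rfl
  | elim a b iha ihb => simp only [discharge, concl, iha hd, ihb hd]
  | intro C t ih =>
    simp only [discharge, concl, ih (ctx := C :: ctx) (d := d + 1) (by simpa using hd)]

theorem exists_discharge_leaf_eq (A B : MFormula) (o : Option ℕ) (d : ℕ) :
    ∃ o', discharge A (.leaf B o) d = .leaf B o' := by
  rcases o with _ | n
  · by_cases hBA : B = A <;> simp [discharge, hBA]
  · exact ⟨some n, rfl⟩

theorem Normal.discharge {A : MFormula} {t : NDTree} {d : ℕ} (h : Normal t) :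
    Normal (discharge A t d) := by
  induction t generalizing d with
  | leaf B o =>
    obtain ⟨o', ho'⟩ := exists_discharge_leaf_eq A B o d
    rw [ho']
    trivial
  | elim a b iha ihb =>
    obtain ⟨ha, hb, hmajor⟩ := h
    refine ⟨iha ha, ihb hb, fun C u hu => ?_⟩
    cases b with
    | leaf B o =>
      obtain ⟨o', ho'⟩ := exists_discharge_leaf_eq A B o d
      rw [ho'] at hu
      cases hu
    | elim x y => cases hu
    | intro C' t' => exact hmajor C' t' rfl
  | intro C t ih => exact ih h

-- Well-formedness in a context of length `d + 1` rules out marks beyond `d`: such a leaf would stay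
-- open after `discharge` even when labelled `A`.
theorem openAssumAux_discharge_subset {A c : MFormula} {t : NDTree} {ctx : List MFormula}
    {d : ℕ} (hlen : ctx.length = d + 1) (h : concl t ctx = some c) :
    openAssumAux (discharge A t d) (d + 1) ⊆ openAssumAux t d \ {A} := by
  induction t generalizing ctx c d with
  | leaf B o =>
    rcases o with _ | n
    · by_cases hBA : B = A <;> simp [discharge, hBA, openAssumAux]
    · have hn : n < d + 1 :=
        hlen ▸ (List.getElem?_eq_some_iff.mp (concl_leaf_some_eq_some.mp h).1).1
      simp [discharge, openAssumAux, Nat.not_le.mpr hn]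
  | elim a b iha ihb =>
    obtain ⟨x, ha, hb⟩ := concl_elim_eq_some.mp h
    simp only [discharge, openAssumAux, Finset.union_sdiff_distrib]
    exact Finset.union_subset_union (iha hlen ha) (ihb hlen hb)
  | intro C t ih =>
    simp only [concl, Option.map_eq_some_iff] at h
    obtain ⟨B, hB, -⟩ := h
    exact ih (ctx := C :: ctx) (by simp [hlen]) hB

end NDTree

open NDTree

def HasNormalDeriv (Γ : Finset MFormula) (α : MFormula) : Prop :=
  ∃ t : NDTree, t.Normal ∧ t.concl [] = some α ∧ t.openAssum ⊆ Γ

def HasNeutralDeriv (Γ : Finset MFormula) (α : MFormula) : Prop :=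
  ∃ t : NDTree, t.Normal ∧ (∀ A u, t ≠ .intro A u) ∧ t.concl [] = some α ∧ t.openAssum ⊆ Γ

section Derivability

variable {Γ Γ' : Finset MFormula} {α β : MFormula}

theorem HasNormalDeriv.mono (h : HasNormalDeriv Γ α) (hΓ : Γ ⊆ Γ') : HasNormalDeriv Γ' α :=
  let ⟨t, hN, hc, ho⟩ := h
  ⟨t, hN, hc, ho.trans hΓ⟩

theorem HasNeutralDeriv.mono (h : HasNeutralDeriv Γ α) (hΓ : Γ ⊆ Γ') : HasNeutralDeriv Γ' α :=
  let ⟨t, hN, hne, hc, ho⟩ := h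
  ⟨t, hN, hne, hc, ho.trans hΓ⟩

theorem HasNeutralDeriv.hasNormalDeriv (h : HasNeutralDeriv Γ α) : HasNormalDeriv Γ α :=
  let ⟨t, hN, _, hc, ho⟩ := h
  ⟨t, hN, hc, ho⟩

theorem HasNeutralDeriv.of_mem (h : α ∈ Γ) : HasNeutralDeriv Γ α :=
  ⟨.leaf α none, trivial, fun _ _ => nofun, rfl, by simpa [openAssum, openAssumAux] using h⟩

theorem HasNeutralDeriv.elim (hf : HasNeutralDeriv Γ (.imp α β)) (ha : HasNormalDeriv Γ α) :
    HasNeutralDeriv Γ β := by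
  obtain ⟨f, hfN, hfne, hfc, hfo⟩ := hf
  obtain ⟨a, haN, hac, hao⟩ := ha
  exact ⟨.elim a f, ⟨haN, hfN, hfne⟩, fun _ _ => nofun,
    concl_elim_eq_some.mpr ⟨α, hac, hfc⟩, Finset.union_subset hao hfo⟩

theorem HasNormalDeriv.intro (h : HasNormalDeriv (insert α Γ) β) :
    HasNormalDeriv Γ (.imp α β) := by
  obtain ⟨t, hN, hc, ho⟩ := h
  have hc' : concl t [α] = some β := concl_append [α] hc
  refine ⟨.intro α (discharge α t 0), hN.discharge, ?_, ?_⟩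
  · simp [concl, concl_discharge, hc']
  · calc openAssumAux (discharge α t 0) 1
        ⊆ openAssum t \ {α} := openAssumAux_discharge_subset rfl hc'
      _ ⊆ Γ := sdiff_le_iff.mpr (by rwa [Finset.insert_eq] at ho)

end Derivability

def Forces (Γ : Finset MFormula) : MFormula → Prop
  | .var p => HasNormalDeriv Γ (.var p)
  | .imp a b => ∀ Γ', Γ ⊆ Γ' → Forces Γ' a → Forces Γ' b

namespace Forces

theorem mono {Γ Γ' : Finset MFormula} (hΓ : Γ ⊆ Γ') : ∀ {α : MFormula}, Forces Γ α → Forces Γ' α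
  | .var _, h => HasNormalDeriv.mono h hΓ
  | .imp _ _, h => fun Γ'' hΓ' ha => h Γ'' (hΓ.trans hΓ') ha

theorem reflect_and_reify (α : MFormula) :
    (∀ Γ, HasNeutralDeriv Γ α → Forces Γ α) ∧ (∀ Γ, Forces Γ α → HasNormalDeriv Γ α) := by
  induction α with
  | var p => exact ⟨fun _ h => h.hasNormalDeriv, fun _ h => h⟩
  | imp a b iha ihb =>
    refine ⟨fun Γ hf Γ' hΓ ha => ihb.1 Γ' ((hf.mono hΓ).elim (iha.2 Γ' ha)), fun Γ hf => ?_⟩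
    have ha : Forces (insert a Γ) a := iha.1 _ (.of_mem (Finset.mem_insert_self a Γ))
    exact (ihb.2 _ (hf _ (Finset.subset_insert a Γ) ha)).intro

theorem of_hasNeutralDeriv {Γ : Finset MFormula} {α : MFormula} (h : HasNeutralDeriv Γ α) :
    Forces Γ α :=
  (reflect_and_reify α).1 Γ h

theorem hasNormalDeriv {Γ : Finset MFormula} {α : MFormula} (h : Forces Γ α) :
    HasNormalDeriv Γ α :=
  (reflect_and_reify α).2 Γ h

end Forces

theorem forces_of_concl {T : NDTree} {ctx : List MFormula} {α : MFormula} {Γ : Finset MFormula}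
    (h : T.concl ctx = some α) (hctx : ∀ B ∈ ctx, Forces Γ B)
    (hΓ : openAssumAux T ctx.length ⊆ Γ) : Forces Γ α := by
  induction T generalizing ctx α Γ with
  | leaf B o =>
    rcases o with _ | n
    · obtain rfl : B = α := by simpa [concl] using h
      exact .of_hasNeutralDeriv (.of_mem (by simpa [openAssumAux] using hΓ))
    · obtain ⟨hn, rfl⟩ := concl_leaf_some_eq_some.mp h
      exact hctx B (List.mem_of_getElem? hn)
  | elim a b iha ihb =>
    obtain ⟨x, ha, hb⟩ := concl_elim_eq_some.mp h
    simp only [openAssumAux, Finset.union_subset_iff] at hΓ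
    exact ihb hb hctx hΓ.2 Γ subset_rfl (iha ha hctx hΓ.1)
  | intro A t ih =>
    simp only [concl, Option.map_eq_some_iff] at h
    obtain ⟨B, hB, rfl⟩ := h
    intro Γ' hΓΓ' hA
    refine ih hB ?_ (hΓ.trans hΓΓ')
    rintro C (_ | ⟨_, hC⟩)
    exacts [hA, (hctx C hC).mono hΓΓ']

/-- Normalization: every derivation of α from Δ yields a
normal derivation of α from some Δ′ ⊆ Δ. -/
theorem normalization (T : NDTree) (α : MFormula)
    (hconcl : T.concl [] = some α) :
    ∃ T' : NDTree, T'.Normal ∧ T'.concl [] = some α ∧ T'.openAssum ⊆ T.openAssum :=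
  (forces_of_concl hconcl (by simp) subset_rfl).hasNormalDeriv
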